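/- Fix d_x, m ≥ 1, training data x^1,…,x^m, y^1,…,y^m ∈ ℝ^{d_x}, and C^∞ activation functions σ_pre, σ_mid, σ_post : ℝ → ℝ with σ_mid(0) = σ_post(0) = 0. For R ≥ 1, let L_R denote the loss function of the 2-shortcut network with R residual units built from this data and these activations, and let H_R denote its Hessian at the zero weight configuration. Then for all R, R' ≥ 1, the set of eigenvalues of H_R equals the set of eigenvalues of H_{R'}; in particular, the ratio of the largest to the smallest absolute eigenvalue of H_R (its condition number) is independent of R, i.e., it is depth-invariant. -/

import Mathlib

noncomputable section

open scoped BigOperators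

/-- Entrywise application of a scalar function to a vector. -/
def emap {d : ℕ} (σ : ℝ → ℝ) (v : Fin d → ℝ) : Fin d → ℝ := fun i => σ (v i)

/-- Matrix–vector product. -/
def mvec {d : ℕ} (M : Fin d → Fin d → ℝ) (v : Fin d → ℝ) : Fin d → ℝ :=
  fun i => ∑ j, M i j * v j

/-- The transformation path with `k` weight matrices applied to `v`:
`a₁ = W₀ v`, `a_{l+1} = W_l σmid.(a_l)`; `chain σmid W k v = a_k`. -/
def chain {d : ℕ} (σmid : ℝ → ℝ) (W : ℕ → Fin d → Fin d → ℝ) :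
    ℕ → (Fin d → ℝ) → (Fin d → ℝ)
  | 0, v => v
  | k + 1, v => mvec (W k) (if k = 0 then v else emap σmid (chain σmid W k v))

/-- One residual unit of an `n`-shortcut network:
`u(x) = σpost.(Wⁿ σmid.(⋯ σmid.(W¹ σpre.(x)))) + x`. -/
def resUnit {d : ℕ} (σpre σmid σpost : ℝ → ℝ) (n : ℕ) (W : ℕ → Fin d → Fin d → ℝ)
    (x : Fin d → ℝ) : Fin d → ℝ :=
  fun i => σpost (chain σmid W n (emap σpre x) i) + x i

/-- The `n`-shortcut network with `R` residual units: composition `u_R ∘ ⋯ ∘ u_1`. -/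
def net {d : ℕ} (σpre σmid σpost : ℝ → ℝ) (n : ℕ) (W : ℕ → ℕ → Fin d → Fin d → ℝ) :
    ℕ → (Fin d → ℝ) → (Fin d → ℝ)
  | 0, x => x
  | r + 1, x => resUnit σpre σmid σpost n (W r) (net σpre σmid σpost n W r x)

/-- Extend finitely indexed weights to ℕ-indexed weights (by zero out of range). -/
def extendW {R n d : ℕ} (W : Fin R → Fin n → Fin d → Fin d → ℝ) :
    ℕ → ℕ → Fin d → Fin d → ℝ :=
  fun r l => if h : r < R ∧ l < n then W ⟨r, h.1⟩ ⟨l, h.2⟩ else 0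

/-- The loss function of an `n`-shortcut network with `R` residual units,
as a function of the collection of all the weight matrices. -/
def loss {d m : ℕ} (σpre σmid σpost : ℝ → ℝ) (n R : ℕ) (X Y : Fin m → Fin d → ℝ)
    (W : Fin R → Fin n → Fin d → Fin d → ℝ) : ℝ :=
  (1 / (2 * (m : ℝ))) *
    ∑ μ : Fin m, ∑ i, (net σpre σmid σpost n (extendW W) R (X μ) i - Y μ i) ^ 2

/-- The coordinate direction in weight space corresponding to the parameter `w^{r,l}_{i,j}`. -/
def coordDir (R n d : ℕ) (r : Fin R) (l : Fin n) (i j : Fin d) :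
    Fin R → Fin n → Fin d → Fin d → ℝ :=
  fun r' l' i' j' => if r' = r ∧ l' = l ∧ i' = i ∧ j' = j then 1 else 0

/-- Second-order partial derivative of `f` at `0` along the directions `v₁, v₂`. -/
def d2 {E : Type*} [NormedAddCommGroup E] [NormedSpace ℝ E] (f : E → ℝ) (v₁ v₂ : E) : ℝ :=
  fderiv ℝ (fun w => fderiv ℝ f w v₂) (0 : E) v₁


lemma fderiv_eq_deriv_slice {E : Type*} [NormedAddCommGroup E] [NormedSpace ℝ E]
    (f : E → ℝ) (hf : ContDiff ℝ (⊤ : ℕ∞) f) (w v : E) :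
    fderiv ℝ f w v = deriv (fun s : ℝ => f (w + s • v)) 0 := by
  have h1 : HasDerivAt (fun s : ℝ => w + s • v) v 0 := by
    simpa using ((hasDerivAt_id (0:ℝ)).smul_const v).const_add w
  have h2 : HasDerivAt (fun s : ℝ => f (w + s • v)) (fderiv ℝ f w v) 0 := by
    have := ((hf.differentiable (by simp) (w + (0:ℝ) • v)).hasFDerivAt).comp_hasDerivAt 0 h1
    simp only [zero_smul, add_zero] at this; exact this
  exact h2.deriv.symm

lemma d2_eq_slice {E : Type*} [NormedAddCommGroup E] [NormedSpace ℝ E]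
    (f : E → ℝ) (hf : ContDiff ℝ (⊤ : ℕ∞) f) (v₁ v₂ : E) :
    d2 f v₁ v₂ = deriv (fun t : ℝ => deriv (fun s : ℝ => f (t • v₁ + s • v₂)) 0) 0 := by
  have hF : ContDiff ℝ (⊤ : ℕ∞) (fun w => fderiv ℝ f w v₂) := by
    have h1 : ContDiff ℝ (⊤ : ℕ∞) (fderiv ℝ f) := hf.fderiv_right (by simp)
    exact (ContinuousLinearMap.apply ℝ ℝ v₂).contDiff.comp h1
  have h1 : HasDerivAt (fun t : ℝ => (t : ℝ) • v₁) v₁ 0 := by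
    simpa using (hasDerivAt_id (0:ℝ)).smul_const v₁
  have h2 : HasDerivAt (fun t : ℝ => fderiv ℝ f (t • v₁) v₂) (d2 f v₁ v₂) 0 := by
    have := ((hF.differentiable (by simp) ((0:ℝ) • v₁)).hasFDerivAt).comp_hasDerivAt 0 h1
    simp only [zero_smul] at this; exact this
  rw [← h2.deriv]
  congr 1
  funext t
  exact fderiv_eq_deriv_slice f hf (t • v₁) v₂

variable {dx m : ℕ} (σpre σmid σpost : ℝ → ℝ)

lemma contDiff_extendW {R : ℕ} (r l : ℕ) (i j : Fin dx) :
    ContDiff ℝ (⊤ : ℕ∞) (fun w : Fin R → Fin 2 → Fin dx → Fin dx → ℝ => extendW w r l i j) := by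
  by_cases h : r < R ∧ l < 2
  · have he : (fun w : Fin R → Fin 2 → Fin dx → Fin dx → ℝ => extendW w r l i j) =
        fun w => w ⟨r, h.1⟩ ⟨l, h.2⟩ i j := by
      funext w; simp only [extendW, dif_pos h]
    rw [he]; fun_prop
  · have he : (fun w : Fin R → Fin 2 → Fin dx → Fin dx → ℝ => extendW w r l i j) =
        fun _ => 0 := by
      funext w; simp only [extendW, dif_neg h]; rfl
    rw [he]; exact contDiff_const

lemma contDiff_net (hpre : ContDiff ℝ (⊤ : ℕ∞) σpre) (hmid : ContDiff ℝ (⊤ : ℕ∞) σmid)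
    (hpost : ContDiff ℝ (⊤ : ℕ∞) σpost) {R : ℕ} (r : ℕ) (x : Fin dx → ℝ) (i : Fin dx) :
    ContDiff ℝ (⊤ : ℕ∞) (fun w : Fin R → Fin 2 → Fin dx → Fin dx → ℝ =>
      net σpre σmid σpost 2 (extendW w) r x i) := by
  induction r generalizing i with
  | zero => exact contDiff_const
  | succ r ih =>
      have : (fun w : Fin R → Fin 2 → Fin dx → Fin dx → ℝ =>
          net σpre σmid σpost 2 (extendW w) (r+1) x i) =
        (fun w => σpost (∑ j, extendW w r 1 i j *
            σmid (∑ k, extendW w r 0 j k *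
              σpre (net σpre σmid σpost 2 (extendW w) r x k))) +
          net σpre σmid σpost 2 (extendW w) r x i) := by
        funext w
        simp [net, resUnit, chain, mvec, emap]
      rw [this]
      refine ContDiff.add ?_ (ih i)
      refine hpost.comp ?_
      refine ContDiff.sum fun j _ => ?_
      refine (contDiff_extendW r 1 i j).mul ?_
      refine hmid.comp ?_
      refine ContDiff.sum fun k _ => ?_
      exact (contDiff_extendW r 0 j k).mul (hpre.comp (ih k))

lemma contDiff_loss (hpre : ContDiff ℝ (⊤ : ℕ∞) σpre) (hmid : ContDiff ℝ (⊤ : ℕ∞) σmid)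
    (hpost : ContDiff ℝ (⊤ : ℕ∞) σpost) {R : ℕ} (X Y : Fin m → Fin dx → ℝ) :
    ContDiff ℝ (⊤ : ℕ∞) (loss (d := dx) (m := m) σpre σmid σpost 2 R X Y) := by
  unfold loss
  refine contDiff_const.mul ?_
  refine ContDiff.sum fun μ _ => ContDiff.sum fun i _ => ?_
  exact ((contDiff_net σpre σmid σpost hpre hmid hpost R (X μ) i).sub contDiff_const).pow 2

lemma resUnit_id (hmid0 : σmid 0 = 0) (hpost0 : σpost 0 = 0) {d : ℕ} (W : ℕ → Fin d → Fin d → ℝ) (x : Fin d → ℝ)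
    (hW : W 0 = 0 ∨ W 1 = 0) :
    resUnit σpre σmid σpost 2 W x = x := by
  have hc : chain σmid W 2 (emap σpre x) = fun _ => 0 := by
    rcases hW with h | h
    · funext i
      simp [chain, mvec, emap, h, hmid0]
    · funext i
      simp [chain, mvec, h]
  funext i
  simp [resUnit, hc, hpost0]

lemma net_id (hmid0 : σmid 0 = 0) (hpost0 : σpost 0 = 0) {d : ℕ} (W : ℕ → ℕ → Fin d → Fin d → ℝ) (R : ℕ) (x : Fin d → ℝ)
    (h : ∀ k < R, W k 0 = 0 ∨ W k 1 = 0) :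
    net σpre σmid σpost 2 W R x = x := by
  induction R with
  | zero => rfl
  | succ R ih =>
      show resUnit σpre σmid σpost 2 (W R) (net σpre σmid σpost 2 W R x) = x
      rw [ih (fun k hk => h k (Nat.lt_succ_of_lt hk)),
        resUnit_id σpre σmid σpost hmid0 hpost0 _ _ (h R (Nat.lt_succ_self R))]

lemma net_single (hmid0 : σmid 0 = 0) (hpost0 : σpost 0 = 0) {d : ℕ} (W : ℕ → ℕ → Fin d → Fin d → ℝ) (R r : ℕ) (x : Fin d → ℝ)
    (hr : r < R) (h : ∀ k < R, k ≠ r → (W k 0 = 0 ∨ W k 1 = 0)) :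
    net σpre σmid σpost 2 W R x = resUnit σpre σmid σpost 2 (W r) x := by
  induction R with
  | zero => omega
  | succ R ih =>
      show resUnit σpre σmid σpost 2 (W R) (net σpre σmid σpost 2 W R x) = _
      rcases Nat.lt_or_ge r R with hrR | hrR
      · rw [ih hrR (fun k hk => h k (Nat.lt_succ_of_lt hk)),
          resUnit_id σpre σmid σpost hmid0 hpost0 _ _ (h R (Nat.lt_succ_self R) (by omega))]
      · have hrR' : r = R := by omega
        subst hrR'
        rw [net_id σpre σmid σpost hmid0 hpost0 W r x
          (fun k hk => h k (Nat.lt_succ_of_lt hk) (by omega))]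


def embedU {dx : ℕ} (R : ℕ) (r : Fin R) (M : Fin 2 → Fin dx → Fin dx → ℝ) :
    Fin R → Fin 2 → Fin dx → Fin dx → ℝ :=
  fun r' l => if r' = r then M l else 0

lemma extendW_embedU {R : ℕ} (r : Fin R) (M : Fin 2 → Fin dx → Fin dx → ℝ) (l : ℕ) :
    extendW (embedU R r M) (r : ℕ) l = if h : l < 2 then M ⟨l, h⟩ else 0 := by
  by_cases hl : l < 2
  · have h : (r : ℕ) < R ∧ l < 2 := ⟨r.isLt, hl⟩
    simp [extendW, h, hl, embedU]
  · have h : ¬((r : ℕ) < R ∧ l < 2) := fun hc => hl hc.2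
    simp [extendW, h, hl]

lemma extendW_embedU_ne {R : ℕ} (r : Fin R) (M : Fin 2 → Fin dx → Fin dx → ℝ) (k l : ℕ)
    (hk : k ≠ (r : ℕ)) : extendW (embedU R r M) k l = 0 := by
  by_cases h : k < R ∧ l < 2
  · simp only [extendW, dif_pos h, embedU]
    rw [if_neg (fun he => hk (by simpa [Fin.ext_iff] using he))]
  · simp only [extendW, dif_neg h]

lemma loss_embedU (hmid0 : σmid 0 = 0) (hpost0 : σpost 0 = 0)
    (X Y : Fin m → Fin dx → ℝ) {R : ℕ} (r : Fin R) (M : Fin 2 → Fin dx → Fin dx → ℝ) :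
    loss σpre σmid σpost 2 R X Y (embedU R r M) =
      loss σpre σmid σpost 2 1 X Y (embedU 1 ⟨0, one_pos⟩ M) := by
  unfold loss
  congr 1
  refine Finset.sum_congr rfl fun μ _ => Finset.sum_congr rfl fun i _ => ?_
  have h1 : net σpre σmid σpost 2 (extendW (embedU R r M)) R (X μ) =
      resUnit σpre σmid σpost 2 (extendW (embedU R r M) (r : ℕ)) (X μ) :=
    net_single σpre σmid σpost hmid0 hpost0 _ R r _ r.isLt
      (fun k _ hkr => Or.inl (extendW_embedU_ne r M k 0 hkr))
  have h2 : net σpre σmid σpost 2 (extendW (embedU 1 ⟨0, one_pos⟩ M)) 1 (X μ) =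
      resUnit σpre σmid σpost 2 (extendW (embedU 1 ⟨0, one_pos⟩ M) 0) (X μ) :=
    net_single σpre σmid σpost hmid0 hpost0 _ 1 0 _ one_pos
      (fun k _ hkr => Or.inl (extendW_embedU_ne _ M k 0 hkr))
  rw [h1, h2]
  have hW : extendW (embedU R r M) (r : ℕ) = extendW (embedU 1 ⟨0, one_pos⟩ M) 0 := by
    funext l
    rw [extendW_embedU, extendW_embedU (r := (⟨0, one_pos⟩ : Fin 1))]
  rw [hW]

lemma comb_eq_embedU {R : ℕ} (r : Fin R) (l l' : Fin 2) (i j i' j' : Fin dx) (t s : ℝ) :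
    t • coordDir R 2 dx r l i j + s • coordDir R 2 dx r l' i' j' =
      embedU R r (fun l'' i'' j'' =>
        t * (if l'' = l ∧ i'' = i ∧ j'' = j then 1 else 0) +
        s * (if l'' = l' ∧ i'' = i' ∧ j'' = j' then 1 else 0)) := by
  funext r'' l'' i'' j''
  simp only [Pi.add_apply, Pi.smul_apply, smul_eq_mul, coordDir, embedU]
  by_cases h : r'' = r
  · simp [h]
  · simp [h, Pi.zero_apply]

lemma loss_comb_const (hmid0 : σmid 0 = 0) (hpost0 : σpost 0 = 0)
    (X Y : Fin m → Fin dx → ℝ) {R : ℕ} (p q : Fin R × Fin 2 × Fin dx × Fin dx)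
    (hpq : p.1 ≠ q.1) (t s : ℝ) :
    loss σpre σmid σpost 2 R X Y
      (t • coordDir R 2 dx p.1 p.2.1 p.2.2.1 p.2.2.2 +
       s • coordDir R 2 dx q.1 q.2.1 q.2.2.1 q.2.2.2) =
    (1 / (2 * (m : ℝ))) * ∑ μ : Fin m, ∑ i, (X μ i - Y μ i) ^ 2 := by
  set w := t • coordDir R 2 dx p.1 p.2.1 p.2.2.1 p.2.2.2 +
       s • coordDir R 2 dx q.1 q.2.1 q.2.2.1 q.2.2.2 with hw
  have hval : ∀ (k l : ℕ) (hk : k < R) (hl : l < 2) (i'' j'' : Fin dx),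
      extendW w k l i'' j'' =
        t * (if (⟨k, hk⟩ : Fin R) = p.1 ∧ (⟨l, hl⟩ : Fin 2) = p.2.1 ∧
              i'' = p.2.2.1 ∧ j'' = p.2.2.2 then 1 else 0) +
        s * (if (⟨k, hk⟩ : Fin R) = q.1 ∧ (⟨l, hl⟩ : Fin 2) = q.2.1 ∧
              i'' = q.2.2.1 ∧ j'' = q.2.2.2 then 1 else 0) := by
    intro k l hk hl i'' j''
    have h : k < R ∧ l < 2 := ⟨hk, hl⟩
    simp [extendW, h, hw, coordDir]
  have key : ∀ k, k < R → extendW w k 0 = 0 ∨ extendW w k 1 = 0 := by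
    intro k hk
    by_cases hp : (⟨k, hk⟩ : Fin R) = p.1
    · have hq : (⟨k, hk⟩ : Fin R) ≠ q.1 := by rw [hp]; exact hpq
      by_cases hl : p.2.1 = ⟨0, by norm_num⟩
      · right
        funext i'' j''
        rw [hval k 1 hk (by norm_num)]
        rw [if_neg (by rintro ⟨-, h2, -⟩; rw [hl] at h2; exact absurd h2 (by decide)),
          if_neg (by rintro ⟨h1, -⟩; exact hq h1)]
        simp
      · have hl' : p.2.1 = ⟨1, by norm_num⟩ := by
          revert hl; generalize p.2.1 = a; revert a; decide
        left
        funext i'' j''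
        rw [hval k 0 hk (by norm_num)]
        rw [if_neg (by rintro ⟨-, h2, -⟩; rw [hl'] at h2; exact absurd h2 (by decide)),
          if_neg (by rintro ⟨h1, -⟩; exact hq h1)]
        simp
    · by_cases hq : (⟨k, hk⟩ : Fin R) = q.1
      · by_cases hl : q.2.1 = ⟨0, by norm_num⟩
        · right
          funext i'' j''
          rw [hval k 1 hk (by norm_num)]
          rw [if_neg (by rintro ⟨h1, -⟩; exact hp h1),
            if_neg (by rintro ⟨-, h2, -⟩; rw [hl] at h2; exact absurd h2 (by decide))]
          simp
        · have hl' : q.2.1 = ⟨1, by norm_num⟩ := by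
            revert hl; generalize q.2.1 = a; revert a; decide
          left
          funext i'' j''
          rw [hval k 0 hk (by norm_num)]
          rw [if_neg (by rintro ⟨h1, -⟩; exact hp h1),
            if_neg (by rintro ⟨-, h2, -⟩; rw [hl'] at h2; exact absurd h2 (by decide))]
          simp
      · left
        funext i'' j''
        rw [hval k 0 hk (by norm_num)]
        rw [if_neg (by rintro ⟨h1, -⟩; exact hp h1),
          if_neg (by rintro ⟨h1, -⟩; exact hq h1)]
        simp
  unfold loss
  congr 1
  refine Finset.sum_congr rfl fun μ _ => Finset.sum_congr rfl fun i _ => ?_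
  rw [net_id σpre σmid σpost hmid0 hpost0 _ R _ key]

lemma d2_entry (hpre : ContDiff ℝ (⊤ : ℕ∞) σpre) (hmid : ContDiff ℝ (⊤ : ℕ∞) σmid)
    (hpost : ContDiff ℝ (⊤ : ℕ∞) σpost) (hmid0 : σmid 0 = 0) (hpost0 : σpost 0 = 0)
    (X Y : Fin m → Fin dx → ℝ) {R : ℕ} (p q : Fin R × Fin 2 × Fin dx × Fin dx) :
    d2 (loss σpre σmid σpost 2 R X Y)
        (coordDir R 2 dx p.1 p.2.1 p.2.2.1 p.2.2.2)
        (coordDir R 2 dx q.1 q.2.1 q.2.2.1 q.2.2.2) =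
      if p.1 = q.1 then
        d2 (loss σpre σmid σpost 2 1 X Y)
          (coordDir 1 2 dx ⟨0, one_pos⟩ p.2.1 p.2.2.1 p.2.2.2)
          (coordDir 1 2 dx ⟨0, one_pos⟩ q.2.1 q.2.2.1 q.2.2.2)
      else 0 := by
  have hc : ContDiff ℝ (⊤ : ℕ∞) (loss (d := dx) (m := m) σpre σmid σpost 2 R X Y) :=
    contDiff_loss σpre σmid σpost hpre hmid hpost X Y
  have hc1 : ContDiff ℝ (⊤ : ℕ∞) (loss (d := dx) (m := m) σpre σmid σpost 2 1 X Y) :=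
    contDiff_loss σpre σmid σpost hpre hmid hpost X Y
  by_cases hpq : p.1 = q.1
  · rw [if_pos hpq, d2_eq_slice _ hc, d2_eq_slice _ hc1]
    congr 1
    funext t
    congr 1
    funext s
    rw [← hpq, comb_eq_embedU, comb_eq_embedU,
      loss_embedU σpre σmid σpost hmid0 hpost0 X Y p.1]
  · rw [if_neg hpq, d2_eq_slice _ hc]
    have hconst : (fun t : ℝ => deriv (fun s : ℝ =>
        loss σpre σmid σpost 2 R X Y
          (t • coordDir R 2 dx p.1 p.2.1 p.2.2.1 p.2.2.2 +
           s • coordDir R 2 dx q.1 q.2.1 q.2.2.1 q.2.2.2)) 0) = fun _ => 0 := by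
      funext t
      have : (fun s : ℝ => loss σpre σmid σpost 2 R X Y
          (t • coordDir R 2 dx p.1 p.2.1 p.2.2.1 p.2.2.2 +
           s • coordDir R 2 dx q.1 q.2.1 q.2.2.1 q.2.2.2)) =
          fun _ => (1 / (2 * (m : ℝ))) * ∑ μ : Fin m, ∑ i, (X μ i - Y μ i) ^ 2 := by
        funext s
        exact loss_comb_const σpre σmid σpost hmid0 hpost0 X Y p q hpq t s
      rw [this, deriv_const]
    rw [hconst, deriv_const]

lemma spec_block {α β : Type*} [Fintype α] [Fintype β] [DecidableEq α] [Nonempty α]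
    (B : Matrix β β ℝ) (M : Matrix (α × β) (α × β) ℝ)
    (hM : ∀ p q, M p q = if p.1 = q.1 then B p.2 q.2 else 0) :
    {μ : ℝ | ∃ v : α × β → ℝ, v ≠ 0 ∧ M.mulVec v = μ • v} =
    {μ : ℝ | ∃ u : β → ℝ, u ≠ 0 ∧ B.mulVec u = μ • u} := by
  ext μ
  constructor
  · rintro ⟨v, hv0, hv⟩
    obtain ⟨p0, hp0⟩ := Function.ne_iff.mp hv0
    refine ⟨fun b => v (p0.1, b), ?_, ?_⟩
    · intro h
      apply hp0
      have := congrFun h p0.2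
      simpa using this
    · funext b
      have := congrFun hv (p0.1, b)
      rw [Pi.smul_apply, smul_eq_mul] at this
      rw [Pi.smul_apply, smul_eq_mul, ← this]
      simp only [Matrix.mulVec, dotProduct, hM, Fintype.sum_prod_type, ite_mul, zero_mul]
      rw [Finset.sum_comm]
      refine Finset.sum_congr rfl fun b' _ => ?_
      simp
  · rintro ⟨u, hu0, hu⟩
    obtain ⟨b0, hb0⟩ := Function.ne_iff.mp hu0
    have a0 : α := Classical.arbitrary α
    refine ⟨fun p => if p.1 = a0 then u p.2 else 0, ?_, ?_⟩
    · intro h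
      apply hb0
      have := congrFun h (a0, b0)
      simpa using this
    · funext p
      have hBu := congrFun hu p.2
      rw [Pi.smul_apply, smul_eq_mul] at hBu
      rw [Pi.smul_apply, smul_eq_mul]
      simp only [Matrix.mulVec, dotProduct, hM, Fintype.sum_prod_type, ite_mul, zero_mul,
        mul_ite, mul_zero]
      by_cases hp : p.1 = a0
      · simp only [hp, if_pos rfl]
        rw [← hBu]
        simp only [Matrix.mulVec, dotProduct]
        rw [Finset.sum_comm]
        simp
      · simp [hp]

/-- Theorem 2, part 2: depth invariance. For 2-shortcut networks built from
the same data and smooth activations with `σmid 0 = σpost 0 = 0`, the set of eigenvalues of the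
Hessian of the loss at the zero weight configuration is the same for any numbers `R, R' ≥ 1` of
residual units; in particular the condition number of the Hessian at zero is depth-invariant. -/
theorem hessian_spectrum_depth_invariant
    {dx m : ℕ}
    (σpre σmid σpost : ℝ → ℝ)
    (hpre : ContDiff ℝ (⊤ : ℕ∞) σpre) (hmid : ContDiff ℝ (⊤ : ℕ∞) σmid) (hpost : ContDiff ℝ (⊤ : ℕ∞) σpost)
    (hmid0 : σmid 0 = 0) (hpost0 : σpost 0 = 0)
    (X Y : Fin m → Fin dx → ℝ)
    (R R' : ℕ) (hR : 1 ≤ R) (hR' : 1 ≤ R') :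
    {μ : ℝ | ∃ v : Fin R × Fin 2 × Fin dx × Fin dx → ℝ, v ≠ 0 ∧
        (Matrix.of fun p q : Fin R × Fin 2 × Fin dx × Fin dx =>
          d2 (loss σpre σmid σpost 2 R X Y)
            (coordDir R 2 dx p.1 p.2.1 p.2.2.1 p.2.2.2)
            (coordDir R 2 dx q.1 q.2.1 q.2.2.1 q.2.2.2)).mulVec v = μ • v} =
    {μ : ℝ | ∃ v : Fin R' × Fin 2 × Fin dx × Fin dx → ℝ, v ≠ 0 ∧
        (Matrix.of fun p q : Fin R' × Fin 2 × Fin dx × Fin dx =>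
          d2 (loss σpre σmid σpost 2 R' X Y)
            (coordDir R' 2 dx p.1 p.2.1 p.2.2.1 p.2.2.2)
            (coordDir R' 2 dx q.1 q.2.1 q.2.2.1 q.2.2.2)).mulVec v = μ • v} := by
  haveI h1 : Nonempty (Fin R) := ⟨⟨0, hR⟩⟩
  haveI h2 : Nonempty (Fin R') := ⟨⟨0, hR'⟩⟩
  set B : Matrix (Fin 2 × Fin dx × Fin dx) (Fin 2 × Fin dx × Fin dx) ℝ :=
    Matrix.of fun a b : Fin 2 × Fin dx × Fin dx =>
      d2 (loss σpre σmid σpost 2 1 X Y)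
        (coordDir 1 2 dx ⟨0, one_pos⟩ a.1 a.2.1 a.2.2)
        (coordDir 1 2 dx ⟨0, one_pos⟩ b.1 b.2.1 b.2.2) with hB
  rw [spec_block B _ (fun p q => by
      simp only [Matrix.of_apply, hB]
      exact d2_entry σpre σmid σpost hpre hmid hpost hmid0 hpost0 X Y p q),
    spec_block B _ (fun p q => by
      simp only [Matrix.of_apply, hB]
      exact d2_entry σpre σmid σpost hpre hmid hpost hmid0 hpost0 X Y p q)]

end
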